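/- Let F be a forest with at least one edge and let r ≥ 2 be an integer. Then there exists an integer k such that Builder has a winning strategy in the deterministic F-avoidance game with r colors and tree size restriction k. -/

import Mathlib

open SimpleGraph Filter Asymptotics
open scoped Classical

/-- A history of the game: the sequence of edges presented so far, together with
the colors (elements of `Fin r`, representing the colors `1,…,r`) they received. -/
abbrev EdgeHistory (V : Type) (r : ℕ) := List (Sym2 V × Fin r)

/-- A Painter strategy on vertex type `V` with `r` colors: a function assigning a color
to every pair (history, new edge). -/
abbrev PainterStrategy (V : Type) (r : ℕ) := EdgeHistory V r → Sym2 V → Fin r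

/-- Auxiliary function: run a Painter strategy on a list of presented edges,
extending the given history. -/
def runPainterAux {V : Type} {r : ℕ} (π : PainterStrategy V r) :
    EdgeHistory V r → List (Sym2 V) → EdgeHistory V r
  | h, [] => h
  | h, e :: es => runPainterAux π (h ++ [(e, π h e)]) es

/-- The colored history obtained by coloring the edges of `l` successively
according to the Painter strategy `π`. -/
def runPainter {V : Type} {r : ℕ} (π : PainterStrategy V r) (l : List (Sym2 V)) :
    EdgeHistory V r :=
  runPainterAux π [] l

/-- `G` contains a copy of `F`, i.e. a subgraph isomorphic to `F`. -/
def IsCopy {α β : Type} (F : SimpleGraph α) (G : SimpleGraph β) : Prop :=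
  ∃ f : α ↪ β, ∀ u v : α, F.Adj u v → G.Adj (f u) (f v)

/-- The graph formed by the edges of color `c` in the history `h`. -/
def colorGraph {V : Type} {r : ℕ} (h : EdgeHistory V r) (c : Fin r) : SimpleGraph V :=
  SimpleGraph.fromEdgeSet {e | (e, c) ∈ h}

/-- The history `h` contains a monochromatic copy of `F`. -/
def HasMonoCopy {α V : Type} {r : ℕ} (F : SimpleGraph α) (h : EdgeHistory V r) : Prop :=
  ∃ c : Fin r, IsCopy F (colorGraph h c)

/-- The number of edges of `G` lying entirely within the vertex set `S`. -/
noncomputable def edgesWithin {V : Type} (G : SimpleGraph V) (S : Set V) : ℕ :=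
  (G.edgeSet ∩ {e | ∀ v ∈ e, v ∈ S}).ncard

/-- `m(G) ≤ d`: every subgraph `H` of `G` with at least one vertex satisfies `e_H ≤ d · v_H`. -/
def DensityLE {V : Type} (G : SimpleGraph V) (d : ℝ) : Prop :=
  ∀ S : Finset V, S.Nonempty → (edgesWithin G (↑S : Set V) : ℝ) ≤ d * (S.card : ℝ)

/-- `G` contains no cycle and every connected component of `G` has at most `k` edges
(equivalently, `G` is acyclic and contains no connected subgraph with more than `k` edges). -/
def TreeSizeLE {V : Type} (G : SimpleGraph V) (k : ℕ) : Prop :=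
  G.IsAcyclic ∧ ∀ S : Set V, (G.induce S).Connected → edgesWithin G S ≤ k

/-- A legal sequence of moves for Builder: distinct non-loop edges. -/
def ValidEdgeSeq {V : Type} (l : List (Sym2 V)) : Prop :=
  l.Nodup ∧ ∀ e ∈ l, ¬ e.IsDiag

/-- The (uncolored) board formed by a list of edges. -/
def boardOf {V : Type} (l : List (Sym2 V)) : SimpleGraph V :=
  SimpleGraph.fromEdgeSet {e | e ∈ l}

/-- Builder has a winning strategy in the deterministic `F`-avoidance game with `r` colors
and density restriction `d`. -/
def BuilderWinsDensity {α : Type} (F : SimpleGraph α) (r : ℕ) (d : ℝ) : Prop :=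
  ∃ a : ℕ, ∀ π : PainterStrategy (Fin a) r, ∃ l : List (Sym2 (Fin a)),
    ValidEdgeSeq l ∧ (∀ i : ℕ, DensityLE (boardOf (l.take i)) d) ∧
    HasMonoCopy F (runPainter π l)

/-- Builder has a winning strategy in the deterministic `F`-avoidance game with `r` colors
and tree size restriction `k`. -/
def BuilderWinsTree {α : Type} (F : SimpleGraph α) (r k : ℕ) : Prop :=
  ∃ a : ℕ, ∀ π : PainterStrategy (Fin a) r, ∃ l : List (Sym2 (Fin a)),
    ValidEdgeSeq l ∧ (∀ i : ℕ, TreeSizeLE (boardOf (l.take i)) k) ∧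
    HasMonoCopy F (runPainter π l)

/-- The Painter strategy `π` on `a` vertices never creates a monochromatic copy of `F`
against any Builder play obeying the tree size restriction `k`. -/
def PainterAvoidsTree {α : Type} (F : SimpleGraph α) (r k a : ℕ)
    (π : PainterStrategy (Fin a) r) : Prop :=
  ∀ l : List (Sym2 (Fin a)), ValidEdgeSeq l →
    (∀ i : ℕ, TreeSizeLE (boardOf (l.take i)) k) →
    ¬ HasMonoCopy F (runPainter π l)

/-- Painter has a winning strategy in the deterministic `F`-avoidance game with `r` colors
and tree size restriction `k`. -/
def PainterWinsTree {α : Type} (F : SimpleGraph α) (r k : ℕ) : Prop :=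
  ∀ a : ℕ, ∃ π : PainterStrategy (Fin a) r, PainterAvoidsTree F r k a π

/-- A sequence of `N` distinct non-loop edges on `n` vertices. -/
def ValidSeqFun {n N : ℕ} (f : Fin N → Sym2 (Fin n)) : Prop :=
  Function.Injective f ∧ ∀ i, ¬ (f i).IsDiag

/-- The probability (with respect to the uniformly random order in which the `N` distinct
edges of the random process on `n` vertices appear) of the event `P`. -/
noncomputable def onlineProb (n N : ℕ) (P : (Fin N → Sym2 (Fin n)) → Prop) : ℝ :=
  (Set.ncard {f : Fin N → Sym2 (Fin n) | ValidSeqFun f ∧ P f} : ℝ) /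
  (Set.ncard {f : Fin N → Sym2 (Fin n) | ValidSeqFun f} : ℝ)

/-- Event: playing the online strategy `π` on the random edge sequence `f` produces
a monochromatic copy of `F`. -/
def OnlineMonoCopy {α : Type} (F : SimpleGraph α) {r n N : ℕ}
    (π : PainterStrategy (Fin n) r) (f : Fin N → Sym2 (Fin n)) : Prop :=
  HasMonoCopy F (runPainter π (List.ofFn f))

/-!
Builder keeps the board a forest by only ever joining two components, which he tracks as
edge-closed vertex sets. A component with a distinguished root `x` carries, for each color `c`,
a complete `|α|`-ary tree of some depth `v c` in color `c`, rooted at `x` and lying inside the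
component. By induction on `m`, Builder can build arbitrarily many disjoint such components with
`∑ c, v c = m`: among many components of depth sum `m`, pigeonhole gives `r * |α| + 1` with the
same depth vector `w`; joining the root of one of them to the roots of the others, `|α|` of the
new edges share a color `c`, so that root now carries a tree of depth `w c + 1` in color `c`.
For `m = r * |α|` some color has depth at least `|α|`, and every forest on `α` embeds in the
complete `|α|`-ary tree of depth `|α|`. The whole construction uses a number of vertices bounded
in terms of `r` and `|α|`, which bounds the size of the components.
-/

open Function

section Painter

variable {V : Type} {r : ℕ} (π : PainterStrategy V r)

theorem runPainterAux_append (h : EdgeHistory V r) (l₁ l₂ : List (Sym2 V)) :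
    runPainterAux π h (l₁ ++ l₂) = runPainterAux π (runPainterAux π h l₁) l₂ := by
  induction l₁ generalizing h with
  | nil => rfl
  | cons e l₁ ih => exact ih _

theorem prefix_runPainterAux (h : EdgeHistory V r) (l : List (Sym2 V)) :
    h <+: runPainterAux π h l := by
  induction l generalizing h with
  | nil => exact List.prefix_refl h
  | cons e l ih => exact (List.prefix_append h _).trans (ih _)

theorem runPainter_subset_append (l l' : List (Sym2 V)) :
    runPainter π l ⊆ runPainter π (l ++ l') := by
  rw [runPainter, runPainter, runPainterAux_append]
  exact (prefix_runPainterAux π _ _).subset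

theorem exists_mem_runPainter {l : List (Sym2 V)} {e : Sym2 V} (he : e ∈ l) :
    ∃ c, (e, c) ∈ runPainter π l := by
  obtain ⟨l₁, l₂, rfl⟩ := List.append_of_mem he
  have hsub := runPainter_subset_append π (l₁ ++ [e]) l₂
  rw [List.append_assoc, List.singleton_append] at hsub
  refine ⟨π (runPainter π l₁) e, hsub ?_⟩
  simp [runPainter, runPainterAux_append, runPainterAux]

end Painter

section Board

variable {V : Type}

theorem boardOf_append_singleton (l : List (Sym2 V)) (x y : V) :
    boardOf (l ++ [s(x, y)]) = boardOf l ⊔ edge x y := by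
  ext u w
  simp [boardOf, edge, fromEdgeSet_adj]
  tauto

def IsForestPlay (l : List (Sym2 V)) : Prop :=
  ValidEdgeSeq l ∧ (boardOf l).IsAcyclic

def AvoidsSet (l : List (Sym2 V)) (S : Finset V) : Prop :=
  ∀ ⦃u w⦄, s(u, w) ∈ l → u ∉ S

def IsEdgeClosed (l : List (Sym2 V)) (S : Finset V) : Prop :=
  ∀ ⦃u w⦄, s(u, w) ∈ l → u ∈ S → w ∈ S

theorem isForestPlay_nil : IsForestPlay ([] : List (Sym2 V)) := by
  refine ⟨⟨List.nodup_nil, by simp⟩, ?_⟩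
  simp [boardOf]

theorem AvoidsSet.isEdgeClosed {l : List (Sym2 V)} {S : Finset V} (h : AvoidsSet l S) :
    IsEdgeClosed l S :=
  fun _ _ he hu => absurd hu (h he)

theorem avoidsSet_singleton {x y : V} {S : Finset V} (hx : x ∉ S) (hy : y ∉ S) :
    AvoidsSet [s(x, y)] S := by
  intro u w he
  rcases Sym2.eq_iff.mp (List.mem_singleton.mp he) with ⟨rfl, -⟩ | ⟨rfl, -⟩
  · exact hx
  · exact hy

theorem IsEdgeClosed.append {l ext : List (Sym2 V)} {S : Finset V} (hS : IsEdgeClosed l S)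
    (hext : AvoidsSet ext S) : IsEdgeClosed (l ++ ext) S := by
  intro u w he hu
  rcases List.mem_append.mp he with he | he
  · exact hS he hu
  · exact absurd hu (hext he)

theorem IsEdgeClosed.mem_of_reachable {l : List (Sym2 V)} {S : Finset V} (hS : IsEdgeClosed l S)
    {u w : V} (hu : u ∈ S) (h : (boardOf l).Reachable u w) : w ∈ S := by
  obtain ⟨p⟩ := h
  induction p with
  | nil => exact hu
  | cons hadj _ ih => exact ih (hS ((fromEdgeSet_adj _).mp hadj).1 hu)

theorem IsEdgeClosed.union_snoc {l : List (Sym2 V)} {S T : Finset V} (hS : IsEdgeClosed l S)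
    (hT : IsEdgeClosed l T) {x y : V} (hx : x ∈ S) (hy : y ∈ T) :
    IsEdgeClosed (l ++ [s(x, y)]) (S ∪ T) := by
  intro u w he hu
  rcases List.mem_append.mp he with he | he
  · rcases Finset.mem_union.mp hu with hu | hu
    · exact Finset.mem_union_left _ (hS he hu)
    · exact Finset.mem_union_right _ (hT he hu)
  · rcases Sym2.eq_iff.mp (List.mem_singleton.mp he) with ⟨-, rfl⟩ | ⟨-, rfl⟩
    · exact Finset.mem_union_right _ hy
    · exact Finset.mem_union_left _ hx

/-- A new edge leaving an edge-closed set joins two components of the board. -/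
theorem IsForestPlay.snoc {l : List (Sym2 V)} (hl : IsForestPlay l) {S : Finset V}
    (hS : IsEdgeClosed l S) {x y : V} (hx : x ∈ S) (hy : y ∉ S) :
    IsForestPlay (l ++ [s(x, y)]) := by
  have hxy : x ≠ y := fun h => hy (h ▸ hx)
  refine ⟨⟨?_, ?_⟩, ?_⟩
  · exact hl.1.1.append (List.nodup_singleton _) <| List.disjoint_singleton.mpr
      fun he => hy (hS he hx)
  · intro e he
    rcases List.mem_append.mp he with he | he
    · exact hl.1.2 e he
    · simpa [List.mem_singleton.mp he] using hxy
  · rw [boardOf_append_singleton]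
    exact hl.2.sup_edge_of_not_reachable fun h => hy (hS.mem_of_reachable hx h)

theorem IsForestPlay.treeSizeLE_take [Fintype V] {l : List (Sym2 V)} (hl : IsForestPlay l)
    (i : ℕ) : TreeSizeLE (boardOf (l.take i)) (Fintype.card (Sym2 V)) := by
  refine ⟨hl.2.anti (fromEdgeSet_mono fun e he => (List.take_sublist i l).subset he), ?_⟩
  intro S _
  exact (Set.ncard_le_card _).trans_eq Nat.card_eq_fintype_card

theorem IsForestPlay.append_star {l : List (Sym2 V)} (hl : IsForestPlay l) {n : ℕ} {y : V}
    {T : Finset V} {xs : Fin n → V} {Ts : Fin n → Finset V} (hy : y ∈ T)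
    (hT : IsEdgeClosed l T) (hxs : ∀ j, xs j ∈ Ts j) (hTs : ∀ j, IsEdgeClosed l (Ts j))
    (hTTs : ∀ j, Disjoint T (Ts j)) (hdisj : Pairwise (Disjoint on Ts)) :
    IsForestPlay (l ++ List.ofFn fun j => s(y, xs j)) ∧
      IsEdgeClosed (l ++ List.ofFn fun j => s(y, xs j)) (T ∪ Finset.univ.biUnion Ts) := by
  induction n generalizing l T with
  | zero => simpa using ⟨hl, hT⟩
  | succ n ih =>
    have hsucc : ∀ j : Fin n, Disjoint (T ∪ Ts 0) (Ts j.succ) := fun j =>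
      Finset.disjoint_union_left.mpr ⟨hTTs _, hdisj (Fin.succ_ne_zero j).symm⟩
    have hstep := ih (xs := fun j => xs j.succ) (Ts := fun j => Ts j.succ)
      (hl.snoc hT hy (Finset.disjoint_right.mp (hTTs 0) (hxs 0)))
      (Finset.mem_union_left _ hy) (hT.union_snoc (hTs 0) hy (hxs 0)) (fun j => hxs _)
      (fun j => (hTs _).append <| avoidsSet_singleton
        (Finset.disjoint_left.mp (hsucc j) (Finset.mem_union_left _ hy))
        (Finset.disjoint_left.mp (hsucc j) (Finset.mem_union_right _ (hxs 0))))
      hsucc (fun i j hij => hdisj ((Fin.succ_injective _).ne hij))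
    have hunion : T ∪ Ts 0 ∪ Finset.univ.biUnion (fun j : Fin n => Ts j.succ) =
        T ∪ Finset.univ.biUnion Ts := by
      ext z
      simp [Fin.exists_fin_succ]
    rw [List.ofFn_succ, ← List.singleton_append, ← List.append_assoc, ← hunion]
    exact hstep

end Board

section MonoTree

variable {V : Type} {r : ℕ} {ι : Type}

/-- The words of length at most `d` over `ι` form the complete `ι`-ary tree of depth `d`, the
children of a word being its one-letter extensions; `g` places this tree injectively in `S`,
with root `x` and every tree edge painted `c`. -/
def HasMonoTree (ι : Type) (h : EdgeHistory V r) (c : Fin r) (x : V) (S : Finset V) (d : ℕ) :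
    Prop :=
  ∃ g : List ι → V, g [] = x ∧ Set.InjOn g {l | l.length ≤ d} ∧
    (∀ l : List ι, l.length ≤ d → g l ∈ S) ∧
    ∀ (l : List ι) (i : ι), l.length < d → (s(g l, g (l ++ [i])), c) ∈ h

theorem HasMonoTree.mono {h h' : EdgeHistory V r} {c : Fin r} {x : V} {S S' : Finset V}
    {d d' : ℕ} (hT : HasMonoTree ι h c x S d) (hh : h ⊆ h') (hS : S ⊆ S') (hd : d' ≤ d) :
    HasMonoTree ι h' c x S' d' := by
  obtain ⟨g, hroot, hinj, hmem, hedge⟩ := hT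
  exact ⟨g, hroot, hinj.mono fun l (hl : l.length ≤ d') => hl.trans hd,
    fun l hl => hS (hmem l (hl.trans hd)), fun l i hl => hh (hedge l i (hl.trans_le hd))⟩

theorem hasMonoTree_zero (h : EdgeHistory V r) (c : Fin r) {x : V} {S : Finset V}
    (hx : x ∈ S) : HasMonoTree ι h c x S 0 :=
  ⟨fun _ => x, rfl, fun l₁ h₁ l₂ h₂ _ => by
    rw [List.eq_nil_of_length_eq_zero (Nat.le_zero.mp h₁),
      List.eq_nil_of_length_eq_zero (Nat.le_zero.mp h₂)], fun _ _ => hx,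
    fun _ _ hl => absurd hl (Nat.not_lt_zero _)⟩

def graft (y : V) (g : ι → List ι → V) : List ι → V
  | [] => y
  | i :: l => g i l

theorem HasMonoTree.succ_of_children {h : EdgeHistory V r} {c : Fin r} {y : V} {S : Finset V}
    {d : ℕ} {xs : ι → V} {Ss : ι → Finset V} (hy : y ∈ S) (hSs : ∀ i, Ss i ⊆ S)
    (hyS : ∀ i, y ∉ Ss i) (hdisj : Pairwise (Disjoint on Ss))
    (hT : ∀ i, HasMonoTree ι h c (xs i) (Ss i) d) (he : ∀ i, (s(y, xs i), c) ∈ h) :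
    HasMonoTree ι h c y S (d + 1) := by
  choose g hroot hinj hmem hedge using hT
  refine ⟨graft y g, rfl, ?_, ?_, ?_⟩
  · rintro (_ | ⟨i, l⟩) hl (_ | ⟨j, m⟩) hm heq <;> simp only [graft] at heq
    · rfl
    · exact absurd (heq ▸ hmem j m (by simpa using hm)) (hyS j)
    · exact absurd (heq ▸ hmem i l (by simpa using hl)) (hyS i)
    · obtain rfl : i = j := by
        by_contra hij
        exact Finset.disjoint_left.mp (hdisj hij) (hmem i l (by simpa using hl))
          (heq ▸ hmem j m (by simpa using hm))
      rw [hinj i (by simpa using hl) (by simpa using hm) heq]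
  · rintro (_ | ⟨i, l⟩) hl
    · exact hy
    · exact hSs i (hmem i l (by simpa using hl))
  · rintro (_ | ⟨j, l⟩) i hl
    · simpa [graft, hroot] using he i
    · exact hedge j l i (by simpa using hl)

end MonoTree

section ForestEmbedding

variable {α : Type} {F : SimpleGraph α}

theorem SimpleGraph.Walk.getLast?_support {u w : α} (p : F.Walk u w) :
    p.support.getLast? = some w := by
  rw [List.getLast?_eq_some_getLast (by simp), p.getLast_support]

/-- The roots only need to be propositionally equal, as they are where this is applied. -/
theorem SimpleGraph.IsAcyclic.support_eq_append_or (hF : F.IsAcyclic) {ρ ρ' u w : α}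
    (hρ : ρ = ρ') {p : F.Walk ρ u} {q : F.Walk ρ' w} (hp : p.IsPath) (hq : q.IsPath)
    (huw : F.Adj u w) : q.support = p.support ++ [w] ∨ p.support = q.support ++ [u] := by
  subst hρ
  by_cases hu : u ∈ q.support
  · left
    rw [hF.path_concat hp hq huw hu, Walk.support_concat]
  · right
    have hw := hF.mem_support_of_ne_mem_support_of_adj_of_isPath hp hq huw hu
    rw [hF.path_concat hq hp huw.symm hw, Walk.support_concat]

/-- A vertex is encoded by the vertex list of the path reaching it from a fixed root of its
component. -/
theorem SimpleGraph.IsAcyclic.exists_pathEncoding [Fintype α] (hF : F.IsAcyclic) :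
    ∃ enc : α → List α, Injective enc ∧ (∀ z, (enc z).length ≤ Fintype.card α) ∧
      ∀ u w, F.Adj u w → enc w = enc u ++ [w] ∨ enc u = enc w ++ [u] := by
  let root : α → α := fun z => (F.connectedComponentMk z).out
  have hreach : ∀ z, F.Reachable (root z) z := fun z =>
    ConnectedComponent.exact (F.connectedComponentMk z).out_eq
  let p : ∀ z, F.Path (root z) z := fun z => (hreach z).some.toPath
  refine ⟨fun z => (p z).1.support, fun z z' h => ?_, fun z => (p z).2.support_nodup.length_le_card,
    fun u w huw => hF.support_eq_append_or ?_ (p u).2 (p w).2 huw⟩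
  · simpa [Walk.getLast?_support] using congrArg List.getLast? h
  · exact congrArg Quot.out (ConnectedComponent.sound huw.reachable)

theorem HasMonoTree.isCopy [Fintype α] (hF : F.IsAcyclic) {V : Type} {r : ℕ}
    {h : EdgeHistory V r} {c : Fin r} {x : V} {S : Finset V}
    (hT : HasMonoTree α h c x S (Fintype.card α)) : IsCopy F (colorGraph h c) := by
  obtain ⟨g, -, hinj, -, hedge⟩ := hT
  obtain ⟨enc, henc, hlen, hadj⟩ := hF.exists_pathEncoding
  have hinj' : Injective (g ∘ enc) := fun z z' h => henc (hinj (hlen z) (hlen z') h)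
  refine ⟨⟨g ∘ enc, hinj'⟩, fun u w huw => ?_⟩
  rw [colorGraph, fromEdgeSet_adj]
  refine ⟨?_, hinj'.ne huw.ne⟩
  rcases hadj u w huw with hw | hu
  · have := hedge (enc u) w (by simpa [hw] using hlen w)
    simpa [Function.comp, hw] using this
  · have := hedge (enc w) u (by simpa [hu] using hlen u)
    simpa [Function.comp, hu, Sym2.eq_swap] using this

end ForestEmbedding

theorem exists_embedding_fiber {δ κ β : Type} [Fintype δ] [Fintype κ] (f : δ → β)
    {t : Finset β} (ht : t.Nonempty) (hf : ∀ i, f i ∈ t)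
    (hcard : t.card * Fintype.card κ ≤ Fintype.card δ) :
    ∃ y, ∃ e : κ ↪ δ, ∀ k, f (e k) = y := by
  obtain ⟨y, -, hy⟩ := Finset.exists_le_card_fiber_of_mul_le_card_of_maps_to
    (s := Finset.univ) (fun i _ => hf i) ht (by simpa using hcard)
  obtain ⟨e⟩ := Function.Embedding.nonempty_of_card_le
    (α := κ) (β := Finset.univ.filter (f · = y)) (by rwa [Fintype.card_coe])
  exact ⟨y, e.trans (Function.Embedding.subtype _), fun k => (Finset.mem_filter.mp (e k).2).2⟩

section Builder

variable {V : Type} {r : ℕ} {ι : Type}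

structure IsTreeCluster (ι : Type) (l : List (Sym2 V)) (h : EdgeHistory V r) (S : Finset V)
    (x : V) (v : Fin r → ℕ) : Prop where
  root_mem : x ∈ S
  isEdgeClosed : IsEdgeClosed l S
  hasMonoTree : ∀ c, HasMonoTree ι h c x S (v c)

theorem IsTreeCluster.append {π : PainterStrategy V r} {l ext : List (Sym2 V)} {S : Finset V}
    {x : V} {v : Fin r → ℕ} (hT : IsTreeCluster ι l (runPainter π l) S x v)
    (hext : AvoidsSet ext S) : IsTreeCluster ι (l ++ ext) (runPainter π (l ++ ext)) S x v :=
  ⟨hT.root_mem, hT.isEdgeClosed.append hext,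
    fun c => (hT.hasMonoTree c).mono (runPainter_subset_append π l ext) subset_rfl le_rfl⟩

theorem exists_hasMonoTree_succ [Fintype ι] (hr : 0 < r) {h : EdgeHistory V r} {y : V}
    {U : Finset V} {xs : Fin (r * Fintype.card ι) → V}
    {Ss : Fin (r * Fintype.card ι) → Finset V} {w : Fin r → ℕ} (hy : y ∈ U)
    (hSs : ∀ j, Ss j ⊆ U) (hyS : ∀ j, y ∉ Ss j) (hdisj : Pairwise (Disjoint on Ss))
    (hT : ∀ j c, HasMonoTree ι h c (xs j) (Ss j) (w c)) (he : ∀ j, ∃ c, (s(y, xs j), c) ∈ h) :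
    ∃ c, HasMonoTree ι h c y U (w c + 1) := by
  choose col hcol using he
  obtain ⟨c, sel, hsel⟩ := exists_embedding_fiber (κ := ι) col
    (Finset.univ_nonempty_iff.mpr ⟨⟨0, hr⟩⟩) (fun _ => Finset.mem_univ _) (by simp)
  refine ⟨c, HasMonoTree.succ_of_children (xs := xs ∘ sel) (Ss := Ss ∘ sel) hy (fun i => hSs _)
    (fun i => hyS _) (hdisj.comp_of_injective sel.injective) (fun i => hT _ c) fun i => ?_⟩
  simpa [hsel i] using hcol (sel i)

theorem IsTreeCluster.merge [Fintype ι] (hr : 0 < r) (π : PainterStrategy V r)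
    {l : List (Sym2 V)} (hl : IsForestPlay l) {S : Fin (r * Fintype.card ι + 1) → Finset V}
    {x : Fin (r * Fintype.card ι + 1) → V} {w : Fin r → ℕ}
    (hS : ∀ j, IsTreeCluster ι l (runPainter π l) (S j) (x j) w)
    (hdisj : Pairwise (Disjoint on S)) :
    ∃ c, IsForestPlay (l ++ List.ofFn fun j => s(x 0, x j.succ)) ∧
      IsTreeCluster ι (l ++ List.ofFn fun j => s(x 0, x j.succ))
        (runPainter π (l ++ List.ofFn fun j => s(x 0, x j.succ)))
        (Finset.univ.biUnion S) (x 0) (w + Pi.single c 1) := by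
  set star := List.ofFn fun j : Fin (r * Fintype.card ι) => s(x 0, x j.succ)
  have hdisj₀ : ∀ j : Fin (r * Fintype.card ι), Disjoint (S 0) (S j.succ) :=
    fun j => hdisj (Fin.succ_ne_zero j).symm
  have hdisj₁ : Pairwise (Disjoint on fun j : Fin (r * Fintype.card ι) => S j.succ) :=
    fun i j hij => hdisj ((Fin.succ_injective _).ne hij)
  obtain ⟨hplay, hclosed⟩ := hl.append_star (xs := fun j => x j.succ) (Ts := fun j => S j.succ)
    (hS 0).root_mem (hS 0).isEdgeClosed (fun j => (hS j.succ).root_mem)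
    (fun j => (hS _).isEdgeClosed) hdisj₀ hdisj₁
  have hmono := runPainter_subset_append π l star
  have hroot : x 0 ∈ Finset.univ.biUnion S :=
    Finset.mem_biUnion.mpr ⟨0, Finset.mem_univ _, (hS 0).root_mem⟩
  obtain ⟨c, hc⟩ := exists_hasMonoTree_succ hr hroot
    (fun j => Finset.subset_biUnion_of_mem S (Finset.mem_univ j.succ))
    (fun j => Finset.disjoint_left.mp (hdisj₀ j) (hS 0).root_mem) hdisj₁
    (fun j c => ((hS _).hasMonoTree c).mono hmono subset_rfl le_rfl)
    (fun j => exists_mem_runPainter π (List.mem_append_right _ (List.mem_ofFn.mpr ⟨j, rfl⟩)))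
  have hunion : Finset.univ.biUnion S =
      S 0 ∪ Finset.univ.biUnion fun j : Fin (r * Fintype.card ι) => S j.succ := by
    ext z
    simp [Fin.exists_fin_succ]
  refine ⟨c, hplay, ⟨hroot, hunion ▸ hclosed, fun c' => ?_⟩⟩
  by_cases hc' : c' = c
  · subst hc'
    simpa using hc
  · simp only [Pi.add_apply, Pi.single_eq_of_ne hc', add_zero]
    exact ((hS 0).hasMonoTree c').mono hmono
      (Finset.subset_biUnion_of_mem S (Finset.mem_univ 0)) le_rfl

/-- The inductive invariant of Builder's strategy: against every Painter, `s` untouched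
vertices suffice to build `N` disjoint tree clusters of depth sum `m` on them. -/
def BuilderForces (ι : Type) (r m N s : ℕ) : Prop :=
  ∀ {V : Type} (π : PainterStrategy V r) (l : List (Sym2 V)) (Fr : Finset V),
    IsForestPlay l → AvoidsSet l Fr → s ≤ Fr.card →
    ∃ (ext : List (Sym2 V)) (S : Fin N → Finset V) (x : Fin N → V) (v : Fin N → Fin r → ℕ),
      IsForestPlay (l ++ ext) ∧ (∀ ⦃u w⦄, s(u, w) ∈ ext → u ∈ Fr) ∧
      Pairwise (Disjoint on S) ∧
      ∀ j, S j ⊆ Fr ∧ ∑ c, v j c = m ∧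
        IsTreeCluster ι (l ++ ext) (runPainter π (l ++ ext)) (S j) (x j) (v j)

theorem builderForces_zero_one : BuilderForces ι r 0 1 1 := by
  intro V π l Fr hl hFr hcard
  obtain ⟨z, hz⟩ := Finset.card_pos.mp (by omega : 0 < Fr.card)
  refine ⟨[], fun _ => {z}, fun _ => z, fun _ => 0, by simpa using hl, by simp,
    fun i j hij => absurd (Subsingleton.elim i j) hij, fun _ => ⟨by simpa using hz, by simp, ?_⟩⟩
  rw [List.append_nil]
  refine ⟨Finset.mem_singleton_self z, AvoidsSet.isEdgeClosed fun u w he hu => ?_,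
    fun c => hasMonoTree_zero _ c (Finset.mem_singleton_self z)⟩
  exact hFr he (Finset.mem_singleton.mp hu ▸ hz)

/-- The two constructions run on disjoint parts of the untouched vertices, so neither
disturbs the clusters of the other. -/
theorem BuilderForces.cons {m N s₁ s₂ : ℕ} (h₁ : BuilderForces ι r m 1 s₁)
    (h₂ : BuilderForces ι r m N s₂) : BuilderForces ι r m (N + 1) (s₁ + s₂) := by
  intro V π l Fr hl hFr hcard
  obtain ⟨Fr₁, hFr₁, hcard₁⟩ := Finset.exists_subset_card_eq (show s₁ ≤ Fr.card by omega)
  have hdisj₁₂ : Disjoint Fr₁ (Fr \ Fr₁) := Finset.disjoint_sdiff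
  obtain ⟨ext₂, S₂, x₂, v₂, hl₂, hext₂, hdisj₂, hS₂⟩ :=
    h₂ π l (Fr \ Fr₁) hl (fun u w he hu => hFr he (Finset.sdiff_subset hu))
      (by rw [Finset.card_sdiff_of_subset hFr₁]; omega)
  have hFr₁' : AvoidsSet (l ++ ext₂) Fr₁ := by
    intro u w he hu
    rcases List.mem_append.mp he with he | he
    · exact hFr he (hFr₁ hu)
    · exact Finset.disjoint_left.mp hdisj₁₂ hu (hext₂ he)
  obtain ⟨ext₁, S₁, x₁, v₁, hl₁, hext₁, -, hS₁⟩ := h₁ π (l ++ ext₂) Fr₁ hl₂ hFr₁' hcard₁.ge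
  refine ⟨ext₂ ++ ext₁, Fin.cons (S₁ 0) S₂, Fin.cons (x₁ 0) x₂, Fin.cons (v₁ 0) v₂, ?_⟩
  rw [← List.append_assoc]
  refine ⟨hl₁, fun u w he => ?_, ?_, fun j => ?_⟩
  · rcases List.mem_append.mp he with he | he
    · exact Finset.sdiff_subset (hext₂ he)
    · exact hFr₁ (hext₁ he)
  · have h₁₂ : ∀ j, Disjoint (S₁ 0) (S₂ j) := fun j =>
      hdisj₁₂.mono ((hS₁ 0).1) ((hS₂ j).1)
    intro i j hij
    induction i using Fin.cases <;> induction j using Fin.cases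
    · exact absurd rfl hij
    · exact h₁₂ _
    · exact (h₁₂ _).symm
    · exact hdisj₂ fun h => hij (congrArg Fin.succ h)
  · induction j using Fin.cases with
    | zero => exact ⟨(hS₁ 0).1.trans hFr₁, (hS₁ 0).2.1, (hS₁ 0).2.2⟩
    | succ j =>
      refine ⟨(hS₂ j).1.trans Finset.sdiff_subset, (hS₂ j).2.1, ?_⟩
      refine ((hS₂ j).2.2.append fun u w he hu => ?_)
      exact Finset.disjoint_left.mp hdisj₁₂ (hext₁ he) ((hS₂ j).1 hu)

theorem BuilderForces.exists_of_one {m : ℕ} (h : ∃ s, BuilderForces ι r m 1 s) (N : ℕ) :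
    ∃ s, BuilderForces ι r m N s := by
  induction N with
  | zero =>
    exact ⟨0, fun π l Fr hl _ _ => ⟨[], finZeroElim, finZeroElim, finZeroElim,
      by simpa using hl, by simp, fun i => i.elim0, fun j => j.elim0⟩⟩
  | succ N ih =>
    obtain ⟨s₁, h₁⟩ := h
    obtain ⟨s₂, h₂⟩ := ih
    exact ⟨s₁ + s₂, h₁.cons h₂⟩

/-- By pigeonhole, `r * |ι| + 1` of the clusters share a depth vector `w`, and merging them
raises one coordinate of `w`. -/
theorem BuilderForces.succ [Fintype ι] (hr : 0 < r) {m s : ℕ}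
    (h : BuilderForces ι r m ((Fintype.piFinset fun _ : Fin r => Finset.range (m + 1)).card *
      (r * Fintype.card ι + 1)) s) :
    BuilderForces ι r (m + 1) 1 s := by
  intro V π l Fr hl hFr hcard
  obtain ⟨ext, S, x, v, hl', hext, hdisj, hS⟩ := h π l Fr hl hFr hcard
  have hv : ∀ j, v j ∈ Fintype.piFinset fun _ : Fin r => Finset.range (m + 1) := fun j =>
    Fintype.mem_piFinset.mpr fun c => Finset.mem_range.mpr <| Nat.lt_succ_of_le <|
      (hS j).2.1 ▸ Finset.single_le_sum (fun _ _ => Nat.zero_le _) (Finset.mem_univ c)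
  obtain ⟨w, e, he⟩ := exists_embedding_fiber (κ := Fin (r * Fintype.card ι + 1)) v
    ⟨0, by simp⟩ hv (by simp)
  obtain ⟨c, hplay, hcl⟩ := IsTreeCluster.merge hr π hl' (S := S ∘ e) (x := x ∘ e) (w := w)
    (fun j => he j ▸ (hS (e j)).2.2) (hdisj.comp_of_injective e.injective)
  have hsub : Finset.univ.biUnion (S ∘ e) ⊆ Fr :=
    Finset.biUnion_subset.mpr fun j _ => (hS (e j)).1
  have hw : ∑ c, w c = m := he 0 ▸ (hS (e 0)).2.1
  rw [List.append_assoc] at hplay hcl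
  refine ⟨_, fun _ => _, fun _ => x (e 0), fun _ => w + Pi.single c 1, hplay, fun u w he => ?_,
    fun i j hij => absurd (Subsingleton.elim i j) hij,
    fun _ => ⟨hsub, by simp [Finset.sum_add_distrib, hw], hcl⟩⟩
  rcases List.mem_append.mp he with he | he
  · exact hext he
  · obtain ⟨j, hj⟩ := List.mem_ofFn.mp he
    rcases Sym2.eq_iff.mp hj with ⟨rfl, -⟩ | ⟨-, rfl⟩
    · exact (hS (e 0)).1 (hS (e 0)).2.2.root_mem
    · exact (hS (e j.succ)).1 (hS (e j.succ)).2.2.root_mem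

theorem exists_builderForces [Fintype ι] (hr : 0 < r) (m N : ℕ) :
    ∃ s, BuilderForces ι r m N s := by
  induction m generalizing N with
  | zero => exact BuilderForces.exists_of_one ⟨1, builderForces_zero_one⟩ N
  | succ m ih =>
    obtain ⟨s, hs⟩ := ih _
    exact BuilderForces.exists_of_one ⟨s, hs.succ hr⟩ N

end Builder

theorem statement17_general {α : Type} [Fintype α] (F : SimpleGraph α) (hforest : F.IsAcyclic)
    (r : ℕ) (hr : 2 ≤ r) :
    ∃ k : ℕ, BuilderWinsTree F r k := by
  obtain ⟨s, hs⟩ := exists_builderForces (ι := α) (by omega : 0 < r) (r * Fintype.card α) 1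
  refine ⟨Fintype.card (Sym2 (Fin s)), s, fun π => ?_⟩
  obtain ⟨ext, S, x, v, hplay, -, -, hS⟩ :=
    hs π [] Finset.univ isForestPlay_nil (fun _ _ h => by simp at h) (by simp)
  obtain ⟨-, hsum, hT⟩ := hS 0
  obtain ⟨c, -, hc⟩ := Finset.exists_le_of_sum_le (f := fun _ => Fintype.card α) (g := v 0)
    (Finset.univ_nonempty_iff.mpr ⟨⟨0, by omega⟩⟩) (by simp [hsum])
  exact ⟨ext, hplay.1, hplay.treeSizeLE_take, c,
    ((hT.hasMonoTree c).mono (List.Subset.refl _) subset_rfl hc).isCopy hforest⟩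

/-- Prop. 1 of Grytczuk–Kierstead–Prałat, as used in the paper. For every
forest `F` with at least one edge and every `r ≥ 2`, there is a tree size restriction `k` for
which Builder has a winning strategy in the deterministic `F`-avoidance game with `r`
colors. -/
theorem statement17 {α : Type} [Fintype α] (F : SimpleGraph α) (hforest : F.IsAcyclic)
    (hF : F.edgeSet.Nonempty) (r : ℕ) (hr : 2 ≤ r) :
    ∃ k : ℕ, BuilderWinsTree F r k :=
  statement17_general F hforest r hr
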